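/- Let n ≥ k ≥ 2 be integers and let M be a finite matroid whose ground set E is partitioned into pairwise disjoint sets E₁, E₂, E₃ with |E₁| = |E₂| = n and |E₃| = k, such that the independent sets of M are exactly the subsets I of E with |I| ≤ n, I ≠ E₁, I ≠ E₂ and E₃ ⊄ I (so M is a copy of B_{n,k} = T_n(U_{n−1,n} ⊕ U_{n−1,n} ⊕ U_{k−1,k})). Then E₃ is a non-spanning circuit of M that is freely placed and coindependent, and the deletion M \ E₃ has independent sets exactly the subsets I of E₁ ∪ E₂ with |I| ≤ n, I ≠ E₁ and I ≠ E₂ (so M \ E₃ is a copy of P_n). -/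

import Mathlib

open Set

namespace Matroid

variable {α β : Type*}

/-- A circuit of a matroid is a minimal dependent set. -/
def Circuit (M : Matroid α) (C : Set α) : Prop :=
  M.Dep C ∧ ∀ ⦃D : Set α⦄, M.Dep D → D ⊆ C → D = C

/-- The rank of a set `X` in a matroid `M` : the maximum cardinality of an
independent subset of `X`. -/
noncomputable def rkOn (M : Matroid α) (X : Set α) : ℕ :=
  sSup {n | ∃ I, M.Indep I ∧ I ⊆ X ∧ I.ncard = n}

/-- The rank of a matroid : the rank of its ground set. -/
noncomputable def rank (M : Matroid α) : ℕ := M.rkOn M.E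

/-- A hyperplane : a flat whose rank is one less than the rank of the matroid. -/
def Hyperplane (M : Matroid α) (H : Set α) : Prop :=
  M.IsFlat H ∧ M.rkOn H + 1 = M.rank

/-- Deletion of the set `D` from the matroid `M`. -/
def delete' (M : Matroid α) (D : Set α) : Matroid α := M.restrict (M.E \ D)

/-- Contraction of the set `C` in the matroid `M`. -/
def contract' (M : Matroid α) (C : Set α) : Matroid α := ((M✶).delete' C)✶

/-- A circuit `C` of `M` is freely placed if every circuit `C'` of `M` with `C' ≠ C`
and `C' ∩ C ≠ ∅` is spanning. -/
def FreelyPlaced (M : Matroid α) (C : Set α) : Prop :=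
  ∀ ⦃C' : Set α⦄, M.Circuit C' → C' ≠ C → (C' ∩ C).Nonempty → M.Spanning C'

/-- A coloop is an element belonging to every base. -/
def Coloop (M : Matroid α) (e : α) : Prop := ∀ ⦃B : Set α⦄, M.IsBase B → e ∈ B

/-- An element `e` is free in `M` if it is not a coloop and every circuit
containing `e` is spanning. -/
def FreeElem (M : Matroid α) (e : α) : Prop :=
  e ∈ M.E ∧ ¬ M.Coloop e ∧ ∀ ⦃C : Set α⦄, M.Circuit C → e ∈ C → M.Spanning C

/-- A loop is an element `e` such that `{e}` is a circuit. -/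
def IsLoop' (M : Matroid α) (e : α) : Prop := M.Circuit {e}

/-- Two non-loop elements of the ground set are parallel if they are equal or
form a two-element circuit. -/
def Parallel (M : Matroid α) (e f : α) : Prop :=
  e ∈ M.E ∧ f ∈ M.E ∧ ¬ M.IsLoop' e ∧ ¬ M.IsLoop' f ∧ (e = f ∨ M.Circuit {e, f})

/-- Two matroids are isomorphic if there is a bijection between their ground sets
mapping independent sets to independent sets. -/
def IsIso (M : Matroid α) (N : Matroid β) : Prop :=
  ∃ e : M.E ≃ N.E, ∀ I : Set M.E,
    M.Indep (Subtype.val '' I) ↔ N.Indep (Subtype.val '' (e '' I))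

/-!
Every independent set of `M` has at most `n` elements, and the set obtained from `E₁` by
swapping one element for an element of `E₂` is an independent `n`-set avoiding `E₃`, so the
bases of `M` are exactly its independent `n`-sets and one of them misses `E₃`. Each proper subset
of `E₃` is independent because `k ≤ n`, so `E₃` is a circuit, too small to contain a base. A
circuit `C ≠ E₃` meeting `E₃` can neither be `E₁`, `E₂` nor contain `E₃`, so it is dependent only
because `|C| > n`; deleting one element of `C` then leaves an independent set of size `n`, a base.
-/

lemma circuit_iff_isCircuit {M : Matroid α} {C : Set α} : M.Circuit C ↔ M.IsCircuit C :=
  isCircuit_iff.symm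

section BoundedIndep

variable {M : Matroid α} [M.Finite] {n : ℕ} {B C X : Set α}

lemma Indep.isBase_of_ncard_eq (hle : ∀ I, M.Indep I → I.ncard ≤ n) (hB : M.Indep B)
    (hBn : B.ncard = n) : M.IsBase B :=
  hB.isBase_of_maximal fun J hJ hBJ ↦
    eq_of_subset_of_ncard_le hBJ (hBn ▸ hle J hJ) hJ.finite

lemma IsCircuit.spanning_of_lt_ncard (hle : ∀ I, M.Indep I → I.ncard ≤ n)
    (hC : M.IsCircuit C) (hCn : n < C.ncard) : M.Spanning C := by
  obtain ⟨e, he⟩ := hC.nonempty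
  have hindep := hC.sdiff_singleton_indep he
  have hcard : (C \ {e}).ncard = n := by
    have := hle _ hindep
    rw [ncard_sdiff_singleton_of_mem he] at this ⊢
    omega
  exact (hindep.isBase_of_ncard_eq hle hcard).spanning.superset sdiff_subset hC.subset_ground

lemma IsBase.not_spanning_of_dep (hB : M.IsBase B) (hX : M.Dep X) (hXB : X.ncard ≤ B.ncard) :
    ¬ M.Spanning X := by
  intro hspan
  obtain ⟨B', hB', hB'X⟩ := hspan.exists_isBase_subset
  have hB'eq : B' = X := eq_of_subset_of_ncard_le hB'X
    (hXB.trans (hB.ncard_eq_ncard_of_isBase hB').le) (M.set_finite X hX.subset_ground)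
  exact hX.not_indep (hB'eq ▸ hB'.indep)

end BoundedIndep

section Bnk

variable {M : Matroid α} {n : ℕ} {E₁ E₂ E₃ I C : Set α}

lemma indep_iff_of_subset_union
    (hI : ∀ I : Set α, M.Indep I ↔ (I ⊆ M.E ∧ I.ncard ≤ n ∧ I ≠ E₁ ∧ I ≠ E₂ ∧ ¬ E₃ ⊆ I))
    (hU : E₁ ∪ E₂ ∪ E₃ = M.E) (h13 : Disjoint E₁ E₃) (h23 : Disjoint E₂ E₃)
    (hE₃ : E₃.Nonempty) (hIs : I ⊆ E₁ ∪ E₂) :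
    M.Indep I ↔ I.ncard ≤ n ∧ I ≠ E₁ ∧ I ≠ E₂ := by
  have hIE : I ⊆ M.E := hU ▸ hIs.trans subset_union_left
  have hE₃I : ¬ E₃ ⊆ I := fun h ↦
    hE₃.ne_empty ((h13.union_left h23).eq_bot_of_ge (h.trans hIs))
  simp only [hI, hIE, hE₃I, true_and, not_false_eq_true, and_true]

lemma isCircuit_of_indep_iff
    (hI : ∀ I : Set α, M.Indep I ↔ (I ⊆ M.E ∧ I.ncard ≤ n ∧ I ≠ E₁ ∧ I ≠ E₂ ∧ ¬ E₃ ⊆ I))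
    [M.Finite] (h13 : Disjoint E₁ E₃) (h23 : Disjoint E₂ E₃) (hE₁ : E₁.Nonempty)
    (hE₂ : E₂.Nonempty) (hE₃E : E₃ ⊆ M.E) (h3 : E₃.ncard ≤ n) : M.IsCircuit E₃ := by
  refine isCircuit_iff_dep_forall_sdiff_singleton_indep.2
    ⟨(not_indep_iff hE₃E).1 fun h ↦ ((hI _).1 h).2.2.2.2 subset_rfl, fun e he ↦ ?_⟩
  refine (hI _).2 ⟨sdiff_subset.trans hE₃E,
    (ncard_le_ncard sdiff_subset (M.set_finite E₃ hE₃E)).trans h3, ?_, ?_, fun h ↦ (h he).2 rfl⟩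
  · exact fun h ↦ hE₁.ne_empty (h13.eq_bot_of_le (h ▸ sdiff_subset))
  · exact fun h ↦ hE₂.ne_empty (h23.eq_bot_of_le (h ▸ sdiff_subset))

lemma lt_ncard_of_isCircuit_of_inter_nonempty
    (hI : ∀ I : Set α, M.Indep I ↔ (I ⊆ M.E ∧ I.ncard ≤ n ∧ I ≠ E₁ ∧ I ≠ E₂ ∧ ¬ E₃ ⊆ I))
    (h13 : Disjoint E₁ E₃) (h23 : Disjoint E₂ E₃) (hE₃ : M.Dep E₃) (hC : M.IsCircuit C)
    (hCE₃ : C ≠ E₃) (hmeet : (C ∩ E₃).Nonempty) : n < C.ncard := by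
  by_contra! hCn
  refine hC.not_indep ((hI C).2 ⟨hC.subset_ground, hCn, ?_, ?_, ?_⟩)
  · rintro rfl
    exact not_disjoint_iff_nonempty_inter.2 hmeet h13
  · rintro rfl
    exact not_disjoint_iff_nonempty_inter.2 hmeet h23
  · exact fun h ↦ hCE₃ (hC.eq_of_dep_subset hE₃ h).symm

lemma exists_isBase_ncard_eq_disjoint
    (hI : ∀ I : Set α, M.Indep I ↔ (I ⊆ M.E ∧ I.ncard ≤ n ∧ I ≠ E₁ ∧ I ≠ E₂ ∧ ¬ E₃ ⊆ I))
    [M.Finite] (hU : E₁ ∪ E₂ ∪ E₃ = M.E) (h12 : Disjoint E₁ E₂) (h13 : Disjoint E₁ E₃)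
    (h23 : Disjoint E₂ E₃) (h1 : E₁.ncard = n) (hn : 2 ≤ n) (hE₂ : E₂.Nonempty)
    (hE₃ : E₃.Nonempty) : ∃ B, M.IsBase B ∧ B.ncard = n ∧ Disjoint B E₃ := by
  obtain ⟨a, ha⟩ : E₁.Nonempty := nonempty_of_ncard_ne_zero (by omega)
  obtain ⟨b, hb⟩ := hE₂
  have hb₁ : b ∉ E₁ := h12.notMem_of_mem_right hb
  have hE₁a : (E₁ \ {a}).ncard = n - 1 := by rw [ncard_sdiff_singleton_of_mem ha, h1]
  obtain ⟨a', ha'⟩ : (E₁ \ {a}).Nonempty := nonempty_of_ncard_ne_zero (by omega)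
  have hBs : insert b (E₁ \ {a}) ⊆ E₁ ∪ E₂ :=
    insert_subset (Or.inr hb) (sdiff_subset.trans subset_union_left)
  have hBn : (insert b (E₁ \ {a})).ncard = n := by
    rw [ncard_insert_of_notMem (fun h ↦ hb₁ h.1) (finite_of_ncard_ne_zero (by omega)), hE₁a]
    omega
  have hBi : M.Indep (insert b (E₁ \ {a})) :=
    (indep_iff_of_subset_union hI hU h13 h23 hE₃ hBs).2 ⟨hBn.le,
      fun h ↦ hb₁ (h ▸ mem_insert b _),
      fun h ↦ h12.notMem_of_mem_left ha'.1 (h ▸ mem_insert_of_mem b ha')⟩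
  exact ⟨_, hBi.isBase_of_ncard_eq (fun I h ↦ ((hI I).1 h).2.1) hBn, hBn,
    (h13.union_left h23).mono_left hBs⟩

end Bnk

/-- In a copy of `B_{n,k}`, the set `E₃` is a freely placed, coindependent,
non-spanning circuit, and deleting it yields a copy of `P_n`. -/
theorem bnk_delete_e3 (M : Matroid α) [M.Finite] (n k : ℕ) (hk : 2 ≤ k) (hnk : k ≤ n)
    (E₁ E₂ E₃ : Set α) (h12 : Disjoint E₁ E₂) (h13 : Disjoint E₁ E₃) (h23 : Disjoint E₂ E₃)
    (hU : E₁ ∪ E₂ ∪ E₃ = M.E) (h1 : E₁.ncard = n) (h2 : E₂.ncard = n) (h3 : E₃.ncard = k)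
    (hI : ∀ I : Set α, M.Indep I ↔ (I ⊆ M.E ∧ I.ncard ≤ n ∧ I ≠ E₁ ∧ I ≠ E₂ ∧ ¬ E₃ ⊆ I)) :
    (M.Circuit E₃ ∧ ¬ M.Spanning E₃) ∧ M.FreelyPlaced E₃ ∧ M.Coindep E₃ ∧
      ∀ I : Set α, (M.delete' E₃).Indep I ↔
        (I ⊆ E₁ ∪ E₂ ∧ I.ncard ≤ n ∧ I ≠ E₁ ∧ I ≠ E₂) := by
  have hE₁ : E₁.Nonempty := nonempty_of_ncard_ne_zero (by omega)
  have hE₂ : E₂.Nonempty := nonempty_of_ncard_ne_zero (by omega)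
  have hE₃ : E₃.Nonempty := nonempty_of_ncard_ne_zero (by omega)
  have hE₃E : E₃ ⊆ M.E := hU ▸ subset_union_right
  obtain ⟨B, hB, hBn, hBE₃⟩ :=
    exists_isBase_ncard_eq_disjoint hI hU h12 h13 h23 h1 (by omega) hE₂ hE₃
  have hcirc := isCircuit_of_indep_iff hI h13 h23 hE₁ hE₂ hE₃E (by omega)
  refine ⟨⟨circuit_iff_isCircuit.2 hcirc, hB.not_spanning_of_dep hcirc.dep (by omega)⟩,
    fun C hC hCE₃ hmeet ↦ ?_, coindep_iff_subset_compl_isBase.2 ⟨B, hB, subset_sdiff.2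
      ⟨hE₃E, hBE₃.symm⟩⟩, fun I ↦ ?_⟩
  · rw [circuit_iff_isCircuit] at hC
    exact hC.spanning_of_lt_ncard (fun I h ↦ ((hI I).1 h).2.1)
      (lt_ncard_of_isCircuit_of_inter_nonempty hI h13 h23 hcirc.dep hC hCE₃ hmeet)
  · have hdel : M.E \ E₃ = E₁ ∪ E₂ := by
      rw [← hU, union_sdiff_right, (h13.union_left h23).sdiff_eq_left]
    rw [delete', restrict_indep_iff, hdel, and_comm]
    exact and_congr_right (indep_iff_of_subset_union hI hU h13 h23 hE₃)

end Matroid
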